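/- arXiv:math/0503670 — 2 statements merged into one kernel-verified Lean document; each statement's English description precedes it below -/
import Mathlib

section
/- In Thompson's group T, for all integers n ≥ 0 and m with 1 ≤ m < n+2, one has c_n^m = c_{n+1}^{m+1} · x_{m-1}^{-1}. -/
/-- Relators of the standard infinite presentation of Thompson's group `T`,
on generators `Sum.inl i ↦ x_i` and `Sum.inr i ↦ c_i`. -/
def TRel : Set (FreeGroup (ℕ ⊕ ℕ)) :=
  { r | (∃ i j : ℕ, i < j ∧
        r = FreeGroup.of (Sum.inl j) * FreeGroup.of (Sum.inl i) *
            (FreeGroup.of (Sum.inl i) * FreeGroup.of (Sum.inl (j + 1)))⁻¹) ∨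
    (∃ k n : ℕ, k < n ∧
        r = FreeGroup.of (Sum.inl k) * FreeGroup.of (Sum.inr (n + 1)) *
            (FreeGroup.of (Sum.inr n) * FreeGroup.of (Sum.inl (k + 1)))⁻¹) ∨
    (∃ n : ℕ, r = FreeGroup.of (Sum.inr n) * FreeGroup.of (Sum.inl 0) *
            ((FreeGroup.of (Sum.inr (n + 1))) ^ 2)⁻¹) ∨
    (∃ n : ℕ, r = FreeGroup.of (Sum.inr n) *
            (FreeGroup.of (Sum.inl n) * FreeGroup.of (Sum.inr (n + 1)))⁻¹) ∨
    (∃ n : ℕ, r = (FreeGroup.of (Sum.inr n)) ^ (n + 2)) }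

/-- Thompson's group `T`. -/
abbrev ThompsonT : Type := PresentedGroup TRel

/-- The generator `x_i` of `T`. -/
def x (i : ℕ) : ThompsonT := PresentedGroup.of (Sum.inl i)

/-- The torsion generator `c_i` of `T`. -/
def c (i : ℕ) : ThompsonT := PresentedGroup.of (Sum.inr i)

lemma relT {r : FreeGroup (ℕ ⊕ ℕ)} (h : r ∈ TRel) :
    (QuotientGroup.mk r : ThompsonT) = 1 := by
  rw [QuotientGroup.eq_one_iff]
  exact Subgroup.subset_normalClosure h

lemma rel2 (k n : ℕ) (h : k < n) : x k * c (n + 1) = c n * x (k + 1) := by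
  have h1 := relT (Or.inr (Or.inl ⟨k, n, h, rfl⟩))
  simp only [QuotientGroup.mk_mul, QuotientGroup.mk_inv, mul_inv_eq_one] at h1
  exact h1

lemma rel3 (n : ℕ) : c n * x 0 = c (n + 1) ^ 2 := by
  have h1 := relT (Or.inr (Or.inr (Or.inl ⟨n, rfl⟩)))
  simp only [QuotientGroup.mk_mul, QuotientGroup.mk_inv, QuotientGroup.mk_pow,
    mul_inv_eq_one] at h1
  exact h1

/-- Pumping lemma, second identity: for `1 ≤ m < n + 2`,
`c_n^m = c_{n+1}^{m+1} * x_{m-1}⁻¹`. -/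
theorem pumping_second (n m : ℕ) (hm : 1 ≤ m) (hmn : m < n + 2) :
    c n ^ m = c (n + 1) ^ (m + 1) * (x (m - 1))⁻¹ := by
  induction m with
  | zero => omega
  | succ k ih =>
    rcases eq_or_lt_of_le hm with h1 | h1
    · obtain rfl : k = 0 := by omega
      rw [pow_one]
      rw [eq_mul_inv_iff_mul_eq]
      exact rel3 n
    · have hk1 : 1 ≤ k := by omega
      have ih' := ih hk1 (by omega)
      have hkn : k - 1 < n := by omega
      have h2 := rel2 (k - 1) n hkn
      have hk : k - 1 + 1 = k := by omega
      rw [hk] at h2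
      have key : (x (k - 1))⁻¹ * c n = c (n + 1) * (x k)⁻¹ := by
        rw [inv_mul_eq_iff_eq_mul, ← mul_assoc, h2, mul_assoc, mul_inv_cancel, mul_one]
      have hk2 : k + 1 - 1 = k := by omega
      rw [pow_succ, ih', hk2, mul_assoc, key, ← mul_assoc, ← pow_succ]
end

section
/- Thompson's group T is generated by the three elements x_0, x_1 and c_1; that is, the subgroup of T generated by {x_0, x_1, c_1} is all of T. -/
lemma TRel_eq_one {r : FreeGroup (ℕ ⊕ ℕ)} (h : r ∈ TRel) :
    PresentedGroup.mk TRel r = 1 := by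
  have : r ∈ Subgroup.normalClosure TRel := Subgroup.subset_normalClosure h
  exact (QuotientGroup.eq_one_iff r).2 this

lemma x_rel {i j : ℕ} (h : i < j) : x j * x i = x i * x (j + 1) := by
  have h1 : PresentedGroup.mk TRel
      (FreeGroup.of (Sum.inl j) * FreeGroup.of (Sum.inl i) *
        (FreeGroup.of (Sum.inl i) * FreeGroup.of (Sum.inl (j + 1)))⁻¹) = 1 :=
    TRel_eq_one (Or.inl ⟨i, j, h, rfl⟩)
  simp only [map_mul, map_inv] at h1
  have := mul_inv_eq_one.mp h1
  exact this

lemma c_rel (n : ℕ) : c n = x n * c (n + 1) := by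
  have h1 : PresentedGroup.mk TRel
      (FreeGroup.of (Sum.inr n) *
        (FreeGroup.of (Sum.inl n) * FreeGroup.of (Sum.inr (n + 1)))⁻¹) = 1 :=
    TRel_eq_one (Or.inr (Or.inr (Or.inr (Or.inl ⟨n, rfl⟩))))
  simp only [map_mul, map_inv] at h1
  exact mul_inv_eq_one.mp h1

/-- Thompson's group `T` is generated by the three elements `x_0`, `x_1` and `c_1`. -/
theorem T_generated_by_three :
    Subgroup.closure ({x 0, x 1, c 1} : Set ThompsonT) = ⊤ := by
  set H := Subgroup.closure ({x 0, x 1, c 1} : Set ThompsonT) with hH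
  have hx0 : x 0 ∈ H := Subgroup.subset_closure (by simp)
  have hx1 : x 1 ∈ H := Subgroup.subset_closure (by simp)
  have hc1 : c 1 ∈ H := Subgroup.subset_closure (by simp)
  have hx : ∀ n, x n ∈ H := by
    intro n
    induction n using Nat.strong_induction_on with
    | _ n ih =>
      match n with
      | 0 => exact hx0
      | 1 => exact hx1
      | (m + 2) =>
        have hr := x_rel (show 0 < m + 1 by omega)
        have key : x (m + 2) = (x 0)⁻¹ * (x (m + 1) * x 0) := by
          show x (m + 1 + 1) = (x 0)⁻¹ * (x (m + 1) * x 0)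
          rw [hr]; group
        rw [key]
        exact H.mul_mem (H.inv_mem hx0) (H.mul_mem (ih (m+1) (by omega)) hx0)
  have hc : ∀ n, c (n + 1) ∈ H := by
    intro n
    induction n with
    | zero => exact hc1
    | succ m ih =>
      have key : c (m + 2) = (x (m + 1))⁻¹ * c (m + 1) := by
        rw [c_rel (m + 1)]; group
      rw [key]
      exact H.mul_mem (H.inv_mem (hx (m + 1))) ih
  rw [hH, eq_top_iff, ← PresentedGroup.closure_range_of TRel]
  apply Subgroup.closure_le _ |>.2
  rintro _ ⟨a, rfl⟩
  cases a with
  | inl i => exact hx i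
  | inr n =>
    cases n with
    | zero =>
      have : c 0 = x 0 * c 1 := c_rel 0
      show c 0 ∈ H
      rw [this]; exact H.mul_mem hx0 hc1
    | succ m => exact hc m
end
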